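/- arXiv:2112.14315 — 4 statements merged into one kernel-verified Lean document; each statement's English description precedes it below -/
import Mathlib

section
/- Let p be a continuous cumulative distribution function on [0,1], strictly increasing on some interval [x₁,x₂] ⊆ [0,1] with δ := p(x₂) − p(x₁) > 0. Then for any cumulative distribution function q of a discrete probability measure supported on at most J points, sup_{x∈[0,1]} |p(x) − q(x)| ≥ δ/(2(J+1)). -/
/-!
Cut the range `[p x₁, p x₂]` into `J + 1` pieces of height `d = δ / (J + 1)` and pull the
cut points back through `p` (intermediate value theorem); since `p` is strictly increasing on
`[x₁, x₂]`, the preimages `y₀ ≤ ⋯ ≤ y_{J+1}` are ordered. The `J + 1` intervals `(yᵢ, yᵢ₊₁]` are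
disjoint, so one of them contains no jump of `q`. There `q` is constant while `p` rises by `d`,
so `|p - q|` is at least `d / 2` at one of its endpoints.
-/

open Set

theorem Monotone.exists_Ioc_succ_disjoint_finset {β : Type*} [Preorder β] {y : ℕ → β}
    (hy : Monotone y) {S : Finset β} {n : ℕ} (hS : S.card < n) :
    ∃ i < n, ∀ z ∈ S, z ∉ Ioc (y i) (y (i + 1)) := by
  by_contra! h
  have : Nonempty β := ⟨y 0⟩
  choose! z hzS hzI using h
  obtain ⟨i, hi, j, hj, hij, hz⟩ :=
    Finset.exists_ne_map_eq_of_card_lt_of_maps_to (s := Finset.range n) (f := z)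
      (by simpa using hS) (fun i hi => hzS i (Finset.mem_range.mp hi))
  rw [Finset.mem_range] at hi hj
  exact disjoint_left.mp (hy.pairwise_disjoint_on_Ioc_succ hij) (hzI i hi) (hz ▸ hzI j hj)

theorem StrictMonoOn.exists_monotone_quantile_points {p : ℝ → ℝ} {x₁ x₂ : ℝ} (hx : x₁ ≤ x₂)
    (hcont : ContinuousOn p (Icc x₁ x₂)) (hstrict : StrictMonoOn p (Icc x₁ x₂)) (n : ℕ) :
    ∃ y : ℕ → ℝ, Monotone y ∧ (∀ k, y k ∈ Icc x₁ x₂) ∧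
      ∀ k ≤ n, p (y k) = p x₁ + k / n * (p x₂ - p x₁) := by
  have hδ : 0 ≤ p x₂ - p x₁ :=
    sub_nonneg.mpr (hstrict.monotoneOn (left_mem_Icc.mpr hx) (right_mem_Icc.mpr hx) hx)
  -- capping at `n` makes the targets monotone on all of `ℕ`, hence so is `y`
  let t : ℕ → ℝ := fun k => p x₁ + (min k n : ℕ) / n * (p x₂ - p x₁)
  have ht : ∀ k, t k ∈ Icc (p x₁) (p x₂) := fun k => by
    have hfrac : ((min k n : ℕ) : ℝ) / n ≤ 1 :=
      div_le_one_of_le₀ (by exact_mod_cast min_le_right k n) n.cast_nonneg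
    constructor <;> nlinarith [show (0 : ℝ) ≤ (min k n : ℕ) / n by positivity]
  choose y hymem hpy using fun k => intermediate_value_Icc hx hcont (ht k)
  refine ⟨y, fun a b hab => ?_, hymem, fun k hk => by simp only [hpy, t, min_eq_left hk]⟩
  rw [← hstrict.le_iff_le (hymem a) (hymem b), hpy, hpy]
  dsimp only [t]
  gcongr

theorem bddAbove_range_abs_sub_of_monotone {p q : ℝ → ℝ} (hp : Monotone p) (hq : Monotone q)
    (a b : ℝ) : BddAbove (range fun x : Icc a b => |p x - q x|) := by
  refine ⟨max (p b - q a) (q b - p a), ?_⟩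
  rintro _ ⟨⟨x, hxa, hxb⟩, rfl⟩
  have := hp hxa; have := hp hxb; have := hq hxa; have := hq hxb
  exact abs_sub_le_iff.mpr ⟨le_max_of_le_left (by linarith), le_max_of_le_right (by linarith)⟩

theorem sub_le_two_mul_iSup_abs_sub_of_eq {p q : ℝ → ℝ} {s : Set ℝ}
    (hbdd : BddAbove (range fun x : s => |p x - q x|)) {a b : ℝ} (ha : a ∈ s) (hb : b ∈ s)
    (hq : q a = q b) : p b - p a ≤ 2 * ⨆ x : s, |p x - q x| := by
  have hsa := le_ciSup hbdd ⟨a, ha⟩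
  have hsb := le_ciSup hbdd ⟨b, hb⟩
  calc p b - p a = (p b - q b) - (p a - q a) := by rw [hq]; ring
    _ ≤ |p b - q b| + |p a - q a| := by linarith [le_abs_self (p b - q b), neg_abs_le (p a - q a)]
    _ ≤ 2 * ⨆ x : s, |p x - q x| := by linarith

theorem stmt_4_general (p q : ℝ → ℝ) (x₁ x₂ : ℝ) (J : ℕ) (S : Finset ℝ)
    (hpmono : Monotone p) (hpcont : Continuous p)
    (hsub : Set.Icc x₁ x₂ ⊆ Set.Icc (0:ℝ) 1)
    (hstrict : StrictMonoOn p (Set.Icc x₁ x₂))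
    (hδ : 0 < p x₂ - p x₁)
    (hqmono : Monotone q)
    (hcard : S.card ≤ J)
    (hstep : ∀ a b : ℝ, a ≤ b → (∀ z ∈ S, z ∉ Set.Ioc a b) → q a = q b) :
    (p x₂ - p x₁) / (2 * (J + 1)) ≤ ⨆ x : Set.Icc (0:ℝ) 1, |p x - q x| := by
  have hx : x₁ ≤ x₂ := le_of_not_gt fun h => hδ.not_ge (sub_nonpos.mpr (hpmono h.le))
  obtain ⟨y, hymono, hymem, hpy⟩ :=
    hstrict.exists_monotone_quantile_points hx hpcont.continuousOn (J + 1)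
  obtain ⟨i, hi, hgap⟩ := hymono.exists_Ioc_succ_disjoint_finset (S := S) (n := J + 1) (by omega)
  have hrise : p (y (i + 1)) - p (y i) = (p x₂ - p x₁) / (J + 1) := by
    rw [hpy _ hi, hpy _ hi.le]
    push_cast
    ring
  have hbound := sub_le_two_mul_iSup_abs_sub_of_eq (bddAbove_range_abs_sub_of_monotone
    hpmono hqmono 0 1) (hsub (hymem i)) (hsub (hymem (i + 1)))
    (hstep _ _ (hymono i.le_succ) hgap)
  rw [hrise] at hbound
  rw [mul_comm, ← div_div]
  linarith

/-- A continuous CDF `p` strictly increasing on `[x₁,x₂] ⊆ [0,1]` with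
`δ := p x₂ − p x₁ > 0` cannot be approximated in supremum norm better than
`δ / (2(J+1))` by the CDF `q` of a discrete probability measure supported on
at most `J` points (equivalently, a step function whose jumps lie in a set `S`
of at most `J` points). -/
theorem stmt_4 (p q : ℝ → ℝ) (x₁ x₂ : ℝ) (J : ℕ) (S : Finset ℝ)
    (hpmono : Monotone p) (hpcont : Continuous p)
    (hp0 : ∀ x < (0:ℝ), p x = 0) (hp1 : ∀ x ≥ (1:ℝ), p x = 1)
    (hsub : Set.Icc x₁ x₂ ⊆ Set.Icc (0:ℝ) 1)
    (hstrict : StrictMonoOn p (Set.Icc x₁ x₂))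
    (hδ : 0 < p x₂ - p x₁)
    (hqmono : Monotone q)
    (hq0 : ∀ x < (0:ℝ), q x = 0) (hq1 : ∀ x ≥ (1:ℝ), q x = 1)
    (hcard : S.card ≤ J)
    (hstep : ∀ a b : ℝ, a ≤ b → (∀ z ∈ S, z ∉ Set.Ioc a b) → q a = q b) :
    (p x₂ - p x₁) / (2 * (J + 1)) ≤ ⨆ x : Set.Icc (0:ℝ) 1, |p x - q x| :=
  stmt_4_general p q x₁ x₂ J S hpmono hpcont hsub hstrict hδ hqmono hcard hstep
end

section
/- Let Q be the transition matrix of an irreducible finite-state Markov chain with J states, and let M be the matrix obtained from I − Qᵀ by replacing its first row with the all-ones row vector. Then M is nonsingular. -/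
/-!
If `M v = 0`, the first row gives `∑ v = 0`, and since the columns of `I − Qᵀ` sum to zero the
other rows force `v Q = v`. For stochastic `Q` the triangle inequality makes `|v|` stationary as
well, and by irreducibility a nonnegative stationary vector with a zero entry vanishes. Applied to
`|v| + v`, which is zero wherever `v ≤ 0`, this gives `v ≤ 0`, and then `∑ v = 0` forces `v = 0`.
-/

open Matrix Finset

namespace Matrix

variable {n R : Type*} [Fintype n] [DecidableEq n]

lemma vecMul_pow_eq_self_of_vecMul_eq_self [Semiring R] {Q : Matrix n n R} {v : n → R}
    (hv : v ᵥ* Q = v) (k : ℕ) : v ᵥ* Q ^ k = v := by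
  induction k with
  | zero => simp
  | succ k ih => rw [pow_succ, ← vecMul_vecMul, ih, hv]

lemma sum_eq_zero_and_vecMul_eq_self_of_updateRow_mulVec_eq_zero [CommRing R]
    {Q : Matrix n n R} (hQ : Q *ᵥ 1 = 1) {i₀ : n} {v : n → R}
    (hv : updateRow (1 - Qᵀ) i₀ (fun _ => 1) *ᵥ v = 0) : ∑ i, v i = 0 ∧ v ᵥ* Q = v := by
  rw [updateRow_mulVec, Function.update_eq_iff] at hv
  obtain ⟨hsum, hrows⟩ := hv
  have hker : (1 - Qᵀ) *ᵥ v = v - v ᵥ* Q := by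
    rw [sub_mulVec, one_mulVec, mulVec_transpose]
  have hcols : 1 ⬝ᵥ ((1 - Qᵀ) *ᵥ v) = 0 := by
    rw [dotProduct_mulVec, vecMul_sub, vecMul_one, vecMul_transpose, hQ, sub_self,
      zero_dotProduct]
  have hrow₀ : ((1 - Qᵀ) *ᵥ v) i₀ = 0 := by
    rwa [one_dotProduct, sum_eq_single i₀ (fun i _ hi => hrows i hi) (by simp)] at hcols
  refine ⟨by simpa [dotProduct] using hsum, (sub_eq_zero.1 ?_).symm⟩
  rw [← hker]
  ext i
  by_cases hi : i = i₀
  · rw [hi, hrow₀]; rfl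
  · exact hrows i hi

variable [Ring R] [LinearOrder R] [IsStrictOrderedRing R]

lemma abs_vecMul_eq_self_of_vecMul_eq_self {Q : Matrix n n R} (hQ : Q ∈ rowStochastic R n)
    {v : n → R} (hv : v ᵥ* Q = v) : |v| ᵥ* Q = |v| := by
  have hle : ∀ i, |v i| ≤ (|v| ᵥ* Q) i := fun i => by
    calc |v i| = |∑ j, v j * Q j i| := by rw [← congrFun hv i]; rfl
      _ ≤ ∑ j, |v j * Q j i| := abs_sum_le_sum_abs _ _
      _ = (|v| ᵥ* Q) i := by
        simp [vecMul, dotProduct, abs_mul, abs_of_nonneg (nonneg_of_mem_rowStochastic hQ)]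
  have hsum : ∑ i, (|v| ᵥ* Q) i = ∑ i, |v i| := by
    have h := dotProduct_mulVec |v| Q 1
    rw [hQ.2] at h
    simpa [dotProduct_one] using h.symm
  funext i
  exact ((sum_eq_sum_iff_of_le fun i _ => hle i).1 hsum.symm i (mem_univ i)).symm

lemma IsIrreducible.eq_zero_of_vecMul_eq_self {Q : Matrix n n R} (hQ : Q.IsIrreducible)
    {w : n → R} (hw : 0 ≤ w) (hfix : w ᵥ* Q = w) {i : n} (hi : w i = 0) : w = 0 := by
  funext k
  obtain ⟨m, -, hm⟩ := (isIrreducible_iff_exists_pow_pos hQ.nonneg).1 hQ k i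
  have hle : w k * (Q ^ m) k i ≤ (w ᵥ* Q ^ m) i :=
    single_le_sum (fun j _ => mul_nonneg (hw j) (pow_apply_nonneg hQ.nonneg m j i)) (mem_univ k)
  rw [vecMul_pow_eq_self_of_vecMul_eq_self hfix, hi] at hle
  exact le_antisymm (nonpos_of_mul_nonpos_left hle hm) (hw k)

lemma IsIrreducible.eq_zero_of_vecMul_eq_self_of_sum_eq_zero {Q : Matrix n n R}
    (hQ : Q.IsIrreducible) (hstoch : Q ∈ rowStochastic R n) {v : n → R} (hfix : v ᵥ* Q = v)
    (hsum : ∑ i, v i = 0) : v = 0 := by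
  rcases isEmpty_or_nonempty n with _ | _
  · exact Subsingleton.elim _ _
  obtain ⟨a, -, ha⟩ := exists_le_of_sum_le univ_nonempty (f := v) (g := 0) (by simp [hsum])
  have hposPart : |v| + v = 0 := by
    refine hQ.eq_zero_of_vecMul_eq_self (i := a) (fun i => ?_) ?_ ?_
    · simpa [neg_le_iff_add_nonneg'] using neg_abs_le (v i)
    · rw [add_vecMul, abs_vecMul_eq_self_of_vecMul_eq_self hstoch hfix, hfix]
    · simp [abs_of_nonpos ha]
  have hnonpos : ∀ i ∈ univ, v i ≤ 0 := fun i _ =>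
    abs_eq_neg_self.1 (eq_neg_of_add_eq_zero_left (congrFun hposPart i))
  funext i
  exact (sum_eq_zero_iff_of_nonpos hnonpos).1 hsum i (mem_univ i)

end Matrix

/-- For an irreducible row-stochastic `J×J` matrix `Q`, the matrix obtained from
`I − Qᵀ` by replacing its first row with the all-ones row is nonsingular. -/
theorem stmt_5 (J : ℕ) [NeZero J] (Q : Matrix (Fin J) (Fin J) ℝ)
    (hnonneg : ∀ i j, 0 ≤ Q i j)
    (hrowsum : ∀ i, ∑ j, Q i j = 1)
    (hirr : ∀ i j, ∃ n : ℕ, 0 < n ∧ 0 < (Q ^ n) i j) :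
    IsUnit (Matrix.updateRow (1 - Qᵀ) 0 (fun _ => (1:ℝ))).det := by
  have hQ : Q.IsIrreducible := (isIrreducible_iff_exists_pow_pos hnonneg).2 hirr
  have hstoch : Q ∈ rowStochastic ℝ (Fin J) := mem_rowStochastic_iff_sum.2 ⟨hnonneg, hrowsum⟩
  rw [isUnit_iff_ne_zero, Ne, ← exists_mulVec_eq_zero_iff]
  rintro ⟨v, hv, hker⟩
  obtain ⟨hsum, hfix⟩ := sum_eq_zero_and_vecMul_eq_self_of_updateRow_mulVec_eq_zero hstoch.2 hker
  exact hv (hQ.eq_zero_of_vecMul_eq_self_of_sum_eq_zero hstoch hfix hsum)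
end

section
/- Suppose a finite-state Markov chain with transition matrix Q (J states) has two distinct closed communicating classes. Then the matrix M, obtained by replacing the first row of I − Qᵀ with the all-ones row vector, is singular. -/
/-!
Restricted to a closed class `C`, the matrix `Q` is still stochastic, so `1 - Q_C` kills the
constant vector and is singular; a nonzero left null vector of it, extended by zero, is a vector
`π` supported on `C` with `π Q = π`. Two disjoint closed classes give two such vectors with
disjoint supports, and a suitable nonzero combination of them has coordinate sum `0`. Such a
vector lies in the kernel of `M`: the rows of `M` other than the first are those of `1 - Qᵀ`,
and the first is the all-ones row.
-/

open Matrix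

namespace Matrix

variable {ι R : Type*} [Fintype ι] [CommRing R] [IsDomain R]

theorem exists_ne_zero_vecMul_eq_self_sum_eq_zero {Q : Matrix ι ι R} {v w : ι → R}
    (hv : v ᵥ* Q = v) (hw : w ᵥ* Q = w) (hv0 : v ≠ 0) {j : ι} (hvj : v j = 0) (hwj : w j ≠ 0) :
    ∃ u : ι → R, u ≠ 0 ∧ u ᵥ* Q = u ∧ ∑ i, u i = 0 := by
  by_cases hsum : ∑ i, v i = 0
  · exact ⟨v, hv0, hv, hsum⟩
  refine ⟨(∑ i, v i) • w - (∑ i, w i) • v, Function.ne_iff.mpr ⟨j, ?_⟩, ?_, ?_⟩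
  · simpa [hvj] using mul_ne_zero hsum hwj
  · rw [sub_vecMul, smul_vecMul, smul_vecMul, hv, hw]
  · simp only [Pi.sub_apply, Pi.smul_apply, smul_eq_mul]
    rw [Finset.sum_sub_distrib, ← Finset.mul_sum, ← Finset.mul_sum, mul_comm, sub_self]

variable [DecidableEq ι]

theorem exists_ne_zero_vecMul_eq_self_of_closed (Q : Matrix ι ι R) {C : Set ι} (hC : C.Nonempty)
    (hrowsum : ∀ i ∈ C, ∑ j, Q i j = 1) (hclosed : ∀ i ∈ C, ∀ j ∉ C, Q i j = 0) :
    ∃ π : ι → R, π ≠ 0 ∧ (∀ j ∉ C, π j = 0) ∧ π ᵥ* Q = π := by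
  classical
  have : Nonempty C := hC.to_subtype
  set Q_C : Matrix C C R := Q.submatrix (↑) (↑)
  have hQ_C : Q_C *ᵥ 1 = 1 := by
    ext i
    rw [Pi.one_apply, ← hrowsum i i.2, ← Fintype.sum_subtype_add_sum_subtype (· ∈ C) (Q i),
      Finset.sum_eq_zero fun (j : {j // j ∉ C}) _ => hclosed i i.2 j j.2, add_zero]
    simp [Q_C, mulVec, dotProduct]
  have hker : (1 - Q_C) *ᵥ 1 = 0 := by rw [sub_mulVec, one_mulVec, hQ_C, sub_self]
  obtain ⟨p, hp0, hp⟩ := exists_vecMul_eq_zero_iff.mpr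
    (exists_mulVec_eq_zero_iff.mp ⟨1, one_ne_zero, hker⟩)
  have hpQ : p ᵥ* Q_C = p := by
    rwa [vecMul_sub, vecMul_one, sub_eq_zero, eq_comm] at hp
  refine ⟨fun j => if h : j ∈ C then p ⟨j, h⟩ else 0, ?_, fun j hj => dif_neg hj, ?_⟩
  · obtain ⟨i, hi⟩ := Function.ne_iff.mp hp0
    exact Function.ne_iff.mpr ⟨i, by simpa using hi⟩
  · ext j
    rw [vecMul, dotProduct, ← Fintype.sum_subtype_add_sum_subtype (· ∈ C)]
    have hout : ∀ x : {x // x ∉ C}, (if h : x.1 ∈ C then p ⟨x, h⟩ else 0) * Q x j = 0 :=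
      fun x => by rw [dif_neg x.2, zero_mul]
    simp only [Finset.sum_congr rfl fun x _ => hout x, Finset.sum_const_zero, add_zero,
      Subtype.coe_prop, dif_pos]
    split_ifs with hj
    · exact congrFun hpQ ⟨j, hj⟩
    · exact Finset.sum_eq_zero fun x _ => by rw [hclosed x x.2 j hj, mul_zero]

theorem det_updateRow_one_sub_transpose_eq_zero {Q : Matrix ι ι R} {v : ι → R} (hv0 : v ≠ 0)
    (hv : v ᵥ* Q = v) (hsum : ∑ i, v i = 0) (i₀ : ι) :
    (updateRow (1 - Qᵀ) i₀ fun _ => 1).det = 0 := by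
  refine exists_mulVec_eq_zero_iff.mp ⟨v, hv0, funext fun i => ?_⟩
  rcases eq_or_ne i i₀ with rfl | hi
  · simpa [mulVec, dotProduct] using hsum
  · rw [mulVec, updateRow_ne hi, ← mulVec, sub_mulVec, one_mulVec, mulVec_transpose, hv, sub_self]

end Matrix

theorem stmt_7_general (J : ℕ) [NeZero J] (Q : Matrix (Fin J) (Fin J) ℝ)
    (hnonneg : ∀ i j, 0 ≤ Q i j)
    (hrowsum : ∀ i, ∑ j, Q i j = 1)
    (C₁ C₂ : Set (Fin J))
    (hne₁ : C₁.Nonempty) (hne₂ : C₂.Nonempty)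
    (hdisj : Disjoint C₁ C₂)
    (hclosed₁ : ∀ i ∈ C₁, ∀ j, 0 < Q i j → j ∈ C₁)
    (hclosed₂ : ∀ i ∈ C₂, ∀ j, 0 < Q i j → j ∈ C₂) :
    (Matrix.updateRow (1 - Qᵀ) 0 (fun _ => (1:ℝ))).det = 0 := by
  have hno_exit : ∀ C : Set (Fin J), (∀ i ∈ C, ∀ j, 0 < Q i j → j ∈ C) →
      ∀ i ∈ C, ∀ j ∉ C, Q i j = 0 :=
    fun C hC i hi j hj => ((hnonneg i j).lt_or_eq.resolve_left (mt (hC i hi j) hj)).symm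
  obtain ⟨π₁, hπ₁0, hπ₁C, hπ₁⟩ := exists_ne_zero_vecMul_eq_self_of_closed Q hne₁
    (fun i _ => hrowsum i) (hno_exit C₁ hclosed₁)
  obtain ⟨π₂, hπ₂0, hπ₂C, hπ₂⟩ := exists_ne_zero_vecMul_eq_self_of_closed Q hne₂
    (fun i _ => hrowsum i) (hno_exit C₂ hclosed₂)
  obtain ⟨j, hj⟩ := Function.ne_iff.mp hπ₂0
  have hjC₂ : j ∈ C₂ := by_contra fun h => hj (hπ₂C j h)
  obtain ⟨v, hv0, hv, hsum⟩ := exists_ne_zero_vecMul_eq_self_sum_eq_zero hπ₁ hπ₂ hπ₁0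
    (hπ₁C j (hdisj.notMem_of_mem_right hjC₂)) hj
  exact det_updateRow_one_sub_transpose_eq_zero hv0 hv hsum 0

/-- If a finite-state Markov chain with row-stochastic transition matrix `Q` has two
distinct (disjoint, nonempty) closed communicating classes, then the matrix obtained by
replacing the first row of `I − Qᵀ` with the all-ones row vector is singular. -/
theorem stmt_7 (J : ℕ) [NeZero J] (Q : Matrix (Fin J) (Fin J) ℝ)
    (hnonneg : ∀ i j, 0 ≤ Q i j)
    (hrowsum : ∀ i, ∑ j, Q i j = 1)
    (C₁ C₂ : Set (Fin J))
    (hne₁ : C₁.Nonempty) (hne₂ : C₂.Nonempty)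
    (hdisj : Disjoint C₁ C₂)
    (hclosed₁ : ∀ i ∈ C₁, ∀ j, 0 < Q i j → j ∈ C₁)
    (hclosed₂ : ∀ i ∈ C₂, ∀ j, 0 < Q i j → j ∈ C₂)
    (hcomm₁ : ∀ i ∈ C₁, ∀ j ∈ C₁, ∃ n : ℕ, 0 < n ∧ 0 < (Q ^ n) i j)
    (hcomm₂ : ∀ i ∈ C₂, ∀ j ∈ C₂, ∃ n : ℕ, 0 < n ∧ 0 < (Q ^ n) i j) :
    (Matrix.updateRow (1 - Qᵀ) 0 (fun _ => (1:ℝ))).det = 0 :=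
  stmt_7_general J Q hnonneg hrowsum C₁ C₂ hne₁ hne₂ hdisj hclosed₁ hclosed₂
end

section
/- Let (Xₙ) be a Markov chain on Ω with stationary distribution π, and suppose there exist m ∈ ℕ, δ > 0, and a state x₀ such that ℙ_u[τ_{x₀} ≤ m] ≥ δ for all u ∈ Ω. Then the stationary probability of x₀ satisfies π({x₀}) ≥ δ/m². -/
/-!
Summing the one-step union bound `hitProb (n + 1) ≤ 𝟙_{x₀} + κ (hitProb n)` against the
invariant measure `π` shows `∫ hitProb n dπ ≤ n π {x₀}`. Integrating the hypothesis
`δ ≤ hitProb m` then gives `δ ≤ m π {x₀} ≤ m² π {x₀}`.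
-/

open MeasureTheory ProbabilityTheory ENNReal

/-- `hitProb κ x₀ n u` is the probability that a Markov chain with transition kernel `κ`
started at `u` hits the state `x₀` within the first `n` steps (at some time `1 ≤ k ≤ n`). -/
noncomputable def hitProb {Ω : Type*} [MeasurableSpace Ω] [DecidableEq Ω]
    (κ : Kernel Ω Ω) (x₀ : Ω) : ℕ → Ω → ℝ≥0∞
  | 0, _ => 0
  | n + 1, u => ∫⁻ v, (if v = x₀ then 1 else hitProb κ x₀ n v) ∂(κ u)

theorem ProbabilityTheory.Kernel.Invariant.lintegral_lintegral {α : Type*} [MeasurableSpace α]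
    {κ : Kernel α α} {μ : Measure α} (hκ : κ.Invariant μ) {f : α → ℝ≥0∞} (hf : Measurable f) :
    ∫⁻ a, ∫⁻ b, f b ∂κ a ∂μ = ∫⁻ a, f a ∂μ := by
  rw [← Measure.lintegral_bind κ.aemeasurable hf.aemeasurable, hκ.def]

section HitProb

variable {Ω : Type*} [MeasurableSpace Ω] [DecidableEq Ω] (κ : Kernel Ω Ω) (x₀ : Ω)

theorem hitProb_succ_le (n : ℕ) (u : Ω) :
    hitProb κ x₀ (n + 1) u ≤ ∫⁻ v, (({x₀} : Set Ω).indicator 1 v + hitProb κ x₀ n v) ∂κ u :=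
  lintegral_mono fun v => by by_cases hv : v = x₀ <;> simp [hv]

variable [MeasurableSingletonClass Ω]

theorem measurable_hitProb (n : ℕ) : Measurable (hitProb κ x₀ n) := by
  induction n with
  | zero => exact measurable_const
  | succ n ih =>
    exact (Measurable.ite (measurableSet_singleton x₀) measurable_const ih).lintegral_kernel

theorem lintegral_hitProb_le {π : Measure Ω} (hinv : κ.Invariant π) (n : ℕ) :
    ∫⁻ u, hitProb κ x₀ n u ∂π ≤ n * π {x₀} := by
  induction n with
  | zero => simp [hitProb]
  | succ n ih =>
    have hind : Measurable (({x₀} : Set Ω).indicator (1 : Ω → ℝ≥0∞)) :=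
      measurable_one.indicator (measurableSet_singleton x₀)
    calc ∫⁻ u, hitProb κ x₀ (n + 1) u ∂π
        ≤ ∫⁻ u, ∫⁻ v, (({x₀} : Set Ω).indicator 1 v + hitProb κ x₀ n v) ∂κ u ∂π :=
          lintegral_mono (hitProb_succ_le κ x₀ n)
      _ = ∫⁻ v, (({x₀} : Set Ω).indicator 1 v + hitProb κ x₀ n v) ∂π :=
          hinv.lintegral_lintegral (hind.add (measurable_hitProb κ x₀ n))
      _ = π {x₀} + ∫⁻ v, hitProb κ x₀ n v ∂π := by
          rw [lintegral_add_left hind, lintegral_indicator_one (measurableSet_singleton x₀)]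
      _ ≤ π {x₀} + n * π {x₀} := by gcongr
      _ = (n + 1 : ℕ) * π {x₀} := by push_cast; ring

end HitProb

theorem stmt_13_general {Ω : Type*} [MeasurableSpace Ω] [MeasurableSingletonClass Ω]
    [DecidableEq Ω]
    (κ : Kernel Ω Ω) (π : Measure Ω) [IsProbabilityMeasure π]
    (hinv : Kernel.Invariant κ π)
    (x₀ : Ω) (m : ℕ) (δ : ℝ≥0∞)
    (h : ∀ u : Ω, δ ≤ hitProb κ x₀ m u) :
    δ / (m : ℝ≥0∞) ^ 2 ≤ π {x₀} := by
  have hδ : δ ≤ m * π {x₀} :=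
    calc δ = ∫⁻ _, δ ∂π := by simp
      _ ≤ ∫⁻ u, hitProb κ x₀ m u ∂π := lintegral_mono h
      _ ≤ m * π {x₀} := lintegral_hitProb_le κ x₀ hinv m
  refine ENNReal.div_le_of_le_mul ?_
  calc δ ≤ m * π {x₀} := hδ
    _ ≤ m ^ 2 * π {x₀} := by gcongr; exact_mod_cast Nat.le_self_pow two_ne_zero m
    _ = π {x₀} * m ^ 2 := mul_comm _ _

/-- If a Markov chain with kernel `κ` has a stationary distribution `π` and from every
state the probability of hitting `x₀` within `m` steps is at least `δ`, then the
stationary probability of `x₀` satisfies `π({x₀}) ≥ δ/m²`. -/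
theorem stmt_13 {Ω : Type*} [MeasurableSpace Ω] [MeasurableSingletonClass Ω]
    [DecidableEq Ω]
    (κ : Kernel Ω Ω) [IsMarkovKernel κ] (π : Measure Ω) [IsProbabilityMeasure π]
    (hinv : Kernel.Invariant κ π)
    (x₀ : Ω) (m : ℕ) (hm : 0 < m) (δ : ℝ≥0∞) (hδ : 0 < δ)
    (h : ∀ u : Ω, δ ≤ hitProb κ x₀ m u) :
    δ / (m : ℝ≥0∞) ^ 2 ≤ π {x₀} :=
  stmt_13_general κ π hinv x₀ m δ h
end
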